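/- arXiv:2312.12962 — 6 statements merged into one kernel-verified Lean document; each statement's English description precedes it below -/
import Mathlib

section
/- Let F be a finite field of order Q and k ≥ 2, and let α ∈ F. The character χ_v of F^k (where v ∈ F^k and χ_v(u) = e(tr(⟨v,u⟩))) satisfies χ_v(α·f) = χ_v(x·f) for all polynomials f of degree less than k−1 (identifying polynomials with coefficient vectors) if and only if v = β·(1, α, α², ..., α^(k-1)) for some β ∈ F. -/
open Finset

/-- Multiplication by `x`: a polynomial of degree `< k-1` becomes one of degree `< k`. -/
def shiftc {F : Type*} [Zero F] {k : ℕ} (f : Fin (k - 1) → F) : Fin k → F :=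
  fun i => if h : 0 < (i : ℕ) ∧ (i : ℕ) - 1 < k - 1 then f ⟨(i : ℕ) - 1, h.2⟩ else 0

/-- The natural inclusion of polynomials of degree `< k-1` into those of degree `< k`. -/
def embedc {F : Type*} [Zero F] {k : ℕ} (f : Fin (k - 1) → F) : Fin k → F :=
  fun i => if h : (i : ℕ) < k - 1 then f ⟨(i : ℕ), h⟩ else 0

/-
The character condition says that `tr ⟨v, α·f - x·f⟩ = 0` for every `f`, since `e` is injective.
Writing both pairings in the coordinates of `f`, this is `tr (∑ⱼ (α vⱼ - vⱼ₊₁) fⱼ) = 0` for all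
`f`, and by nondegeneracy of the trace form it holds exactly when `vⱼ₊₁ = α vⱼ` for all `j`,
i.e. when `v` is a geometric progression with ratio `α`.
-/

theorem ZMod.injective_exp_two_pi_I_mul_val_div (N : ℕ) [NeZero N] :
    Function.Injective fun t : ZMod N =>
      Complex.exp (2 * Real.pi * Complex.I * (t.val : ℂ) / N) := by
  convert ZMod.injective_stdAddChar (N := N) using 1
  funext t
  rw [ZMod.stdAddChar_apply, ZMod.toCircle_apply]

section Coordinates

variable {R : Type*} [NonUnitalNonAssocSemiring R] {m : ℕ}

theorem sum_mul_embedc (w : Fin (m + 1) → R) (f : Fin (m + 1 - 1) → R) :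
    ∑ i, w i * embedc f i = ∑ j : Fin m, w j.castSucc * f j := by
  rw [Fin.sum_univ_castSucc]
  simp [embedc]

theorem sum_mul_shiftc (w : Fin (m + 1) → R) (f : Fin (m + 1 - 1) → R) :
    ∑ i, w i * shiftc f i = ∑ j : Fin m, w j.succ * f j := by
  rw [Fin.sum_univ_succ]
  simp [shiftc]

end Coordinates

theorem forall_trace_sum_mul_eq_zero_iff {K L ι : Type*} [Field K] [Field L] [Algebra K L]
    [FiniteDimensional K L] [Algebra.IsSeparable K L] [Fintype ι] [DecidableEq ι] (c : ι → L) :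
    (∀ f : ι → L, Algebra.trace K L (∑ j, c j * f j) = 0) ↔ c = 0 := by
  refine ⟨fun h => funext fun j => ?_, by rintro rfl f; simp⟩
  refine (traceForm_nondegenerate K L).1 (c j) fun x => ?_
  simpa [Pi.single_apply] using h (Pi.single j x)

theorem forall_succ_eq_mul_castSucc_iff {M : Type*} [CommMonoid M] {m : ℕ}
    (v : Fin (m + 1) → M) (α : M) :
    (∀ j : Fin m, v j.succ = α * v j.castSucc) ↔
      ∃ β, v = fun i : Fin (m + 1) => β * α ^ (i : ℕ) := by
  constructor
  · intro h
    refine ⟨v 0, funext fun i => Fin.induction (by simp) (fun j ih => ?_) i⟩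
    rw [h, ih, Fin.val_succ, Fin.val_castSucc, pow_succ, mul_comm α, mul_assoc]
  · rintro ⟨β, rfl⟩ j
    beta_reduce
    rw [Fin.val_succ, Fin.val_castSucc, pow_succ, mul_comm α, mul_assoc]

theorem stmt7_general {F : Type*} [Field F] [Fintype F] (p k : ℕ)
    [Fact p.Prime] [Algebra (ZMod p) F]
    (v : Fin k → F) (α : F) :
    let e : ZMod p → ℂ := fun t => Complex.exp (2 * Real.pi * Complex.I * (t.val : ℂ) / p)
    let χ : (Fin k → F) → ℂ :=
      fun u => e (Algebra.trace (ZMod p) F (∑ i : Fin k, v i * u i))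
    ((∀ f : Fin (k - 1) → F, χ (fun i => α * embedc f i) = χ (shiftc f)) ↔
      ∃ β : F, v = fun i : Fin k => β * α ^ (i : ℕ)) := by
  intro e χ
  obtain _ | m := k
  · exact ⟨fun _ => ⟨0, Subsingleton.elim _ _⟩, fun _ _ => congrArg χ (Subsingleton.elim _ _)⟩
  have : NeZero p := ⟨(Fact.out : p.Prime).ne_zero⟩
  have hχ : ∀ f : Fin (m + 1 - 1) → F, χ (fun i => α * embedc f i) = χ (shiftc f) ↔
      Algebra.trace (ZMod p) F (∑ j : Fin m, (α * v j.castSucc - v j.succ) * f j) = 0 := by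
    intro f
    have hpair : ∑ i, v i * (α * embedc f i) - ∑ i, v i * shiftc f i
        = ∑ j : Fin m, (α * v j.castSucc - v j.succ) * f j := by
      rw [sum_congr rfl fun i _ => (mul_left_comm (v i) α _).trans (mul_assoc α _ _).symm,
        sum_mul_embedc, sum_mul_shiftc, ← sum_sub_distrib]
      simp only [sub_mul]
    rw [← hpair, map_sub, sub_eq_zero]
    exact (ZMod.injective_exp_two_pi_I_mul_val_div p).eq_iff
  calc (∀ f, χ (fun i => α * embedc f i) = χ (shiftc f))
      ↔ ∀ f : Fin m → F,
        Algebra.trace (ZMod p) F (∑ j, (α * v j.castSucc - v j.succ) * f j) = 0 :=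
        forall_congr' hχ
    _ ↔ (fun j : Fin m => α * v j.castSucc - v j.succ) = 0 := forall_trace_sum_mul_eq_zero_iff _
    _ ↔ ∀ j : Fin m, v j.succ = α * v j.castSucc := by
        simp only [funext_iff, Pi.zero_apply, sub_eq_zero, eq_comm]
    _ ↔ _ := forall_succ_eq_mul_castSucc_iff v α

theorem stmt7 {F : Type*} [Field F] [Fintype F] (p Q k : ℕ)
    [Fact p.Prime] [CharP F p] [Algebra (ZMod p) F]
    (hQ : Fintype.card F = Q) (hk : 2 ≤ k) (v : Fin k → F) (α : F) :
    let e : ZMod p → ℂ := fun t => Complex.exp (2 * Real.pi * Complex.I * (t.val : ℂ) / p)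
    let χ : (Fin k → F) → ℂ :=
      fun u => e (Algebra.trace (ZMod p) F (∑ i : Fin k, v i * u i))
    ((∀ f : Fin (k - 1) → F, χ (fun i => α * embedc f i) = χ (shiftc f)) ↔
      ∃ β : F, v = fun i : Fin k => β * α ^ (i : ℕ)) :=
  stmt7_general p k v α
end

section
/- Let F be a finite field of order Q, k ≥ 2, and L a set of ℓ polynomials of degree < k over F. For α, β ∈ F define χ_{α,β}(f) = e(tr(β·f(α))) as a character of the additive group of polynomials of degree < k. Then Σ over α ∈ F and β ∈ F \ {0} of |Q^(−k/2)·Σ_{f∈L} χ_{α,β}(f)|² is at most Q^(−k+1)·ℓ·(Q + ℓ(k−1)). -/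
/-!
Expanding the square and summing over all `β` (the `β = 0` term is nonnegative, so adding it only
enlarges the left side), orthogonality of the primitive character `ψ = e ∘ tr` turns
`∑_β |∑_{f ∈ L} ψ(β f(α))|²` into `Q · #{(f, g) ∈ L² | f(α) = g(α)}`. Summing over `α`, the diagonal
pairs contribute `ℓ Q`, and each of the other pairs at most `k - 1`, since `f - g` is a nonzero
polynomial of degree `< k`.
-/

open Finset

/-- Evaluation of the polynomial with coefficient vector `c` (degree `< k`) at `x`. -/
def evalc {F : Type*} [CommSemiring F] {k : ℕ} (c : Fin k → F) (x : F) : F :=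
  ∑ i : Fin k, c i * x ^ (i : ℕ)

open Polynomial in
lemma evalc_eq_eval_ofFn {R : Type*} [CommSemiring R] [DecidableEq R] {k : ℕ} (c : Fin k → R)
    (x : R) : evalc c x = (ofFn k c).eval x := by
  simp [evalc, ofFn_eq_sum_monomial, eval_finsetSum]

lemma card_filter_evalc_eq_lt {R : Type*} [CommRing R] [IsDomain R] [DecidableEq R] [Fintype R]
    {k : ℕ} {f g : Fin k → R} (hfg : f ≠ g) :
    #{x | evalc f x = evalc g x} < k := by
  have hk : 1 ≤ k :=
    Nat.one_le_iff_ne_zero.2 fun h => by subst h; exact hfg (Subsingleton.elim _ _)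
  by_contra! hcard
  refine hfg (Polynomial.injective_ofFn k ?_)
  refine Polynomial.eq_of_natDegree_lt_card_of_eval_eq' _ _ {x | evalc f x = evalc g x}
    (fun x hx => ?_) ?_
  · rw [← evalc_eq_eval_ofFn, ← evalc_eq_eval_ofFn]
    exact (mem_filter.1 hx).2
  · exact (max_lt (Polynomial.ofFn_natDegree_lt hk f)
      (Polynomial.ofFn_natDegree_lt hk g)).trans_le hcard

lemma sum_norm_sq_sum_mulShift {ι R K : Type*} [CommRing R] [Fintype R] [DecidableEq R]
    [RCLike K] {ψ : AddChar R K} (hψ : ψ.IsPrimitive) (s : Finset ι) (a : ι → R) :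
    ∑ b : R, ‖∑ i ∈ s, ψ (b * a i)‖ ^ 2
      = Fintype.card R * ∑ i ∈ s, ∑ j ∈ s, if a i = a j then (1 : ℝ) else 0 := by
  apply RCLike.ofReal_injective (K := K)
  push_cast
  simp_rw [← RCLike.mul_conj, map_sum, ← AddChar.map_neg_eq_conj, sum_mul_sum,
    ← AddChar.map_add_eq_mul, ← mul_neg, ← mul_add, ← sub_eq_add_neg]
  rw [sum_comm]
  simp_rw [mul_sum]
  refine sum_congr rfl fun i _ => ?_
  rw [sum_comm]
  refine sum_congr rfl fun j _ => ?_
  rw [AddChar.sum_mulShift _ hψ]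
  simp only [sub_eq_zero]
  split_ifs <;> simp

lemma sum_sum_card_filter_evalc_eq_le {R : Type*} [CommRing R] [IsDomain R] [DecidableEq R]
    [Fintype R] {k : ℕ} (L : Finset (Fin k → R)) :
    ∑ f ∈ L, ∑ g ∈ L, #{x | evalc f x = evalc g x}
      ≤ #L * Fintype.card R + #L * #L * (k - 1) := by
  have hpair : ∀ f g : Fin k → R,
      #{x | evalc f x = evalc g x} ≤ (if f = g then Fintype.card R else 0) + (k - 1) := by
    intro f g
    by_cases hfg : f = g
    · simp [hfg]
    · simpa [hfg] using Nat.le_sub_one_of_lt (card_filter_evalc_eq_lt hfg)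
  calc ∑ f ∈ L, ∑ g ∈ L, #{x | evalc f x = evalc g x}
      ≤ ∑ f ∈ L, ∑ g ∈ L, ((if f = g then Fintype.card R else 0) + (k - 1)) :=
        sum_le_sum fun f _ => sum_le_sum fun g _ => hpair f g
    _ = #L * Fintype.card R + #L * #L * (k - 1) := by
        simp_rw [sum_add_distrib, sum_ite_eq, sum_const, smul_eq_mul]
        rw [sum_ite_mem, inter_self, sum_const, smul_eq_mul, mul_assoc]

lemma sum_sum_norm_sq_sum_evalc_le {R K : Type*} [CommRing R] [IsDomain R] [DecidableEq R]
    [Fintype R] [RCLike K] {ψ : AddChar R K} (hψ : ψ.IsPrimitive) {k : ℕ} (hk : 1 ≤ k)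
    (L : Finset (Fin k → R)) :
    ∑ x : R, ∑ b : R, ‖∑ f ∈ L, ψ (b * evalc f x)‖ ^ 2
      ≤ Fintype.card R * (#L * Fintype.card R + #L * #L * (k - 1 : ℝ)) := by
  simp_rw [sum_norm_sq_sum_mulShift hψ, ← mul_sum]
  gcongr
  rw [sum_comm]
  simp_rw [sum_comm (s := univ), sum_boole]
  rw [← Nat.cast_one, ← Nat.cast_sub hk]
  exact_mod_cast sum_sum_card_filter_evalc_eq_le L

noncomputable def traceAddChar (p : ℕ) [NeZero p] (F : Type*) [Field F] [Algebra (ZMod p) F] :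
    AddChar F ℂ :=
  ZMod.stdAddChar.compAddMonoidHom (Algebra.trace (ZMod p) F).toAddMonoidHom

lemma traceAddChar_apply (p : ℕ) [NeZero p] {F : Type*} [Field F] [Algebra (ZMod p) F] (x : F) :
    traceAddChar p F x
      = Complex.exp (2 * Real.pi * Complex.I * ((Algebra.trace (ZMod p) F x).val : ℂ) / p) :=
  ZMod.toCircle_apply _

lemma isPrimitive_traceAddChar (p : ℕ) [Fact p.Prime] (F : Type*) [Field F] [Fintype F]
    [Algebra (ZMod p) F] : (traceAddChar p F).IsPrimitive := by
  refine AddChar.IsPrimitive.of_ne_one (AddChar.ne_one_iff.2 ?_)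
  obtain ⟨a, ha⟩ := Algebra.trace_surjective (ZMod p) F 1
  refine ⟨a, fun h => one_ne_zero (ZMod.injective_stdAddChar (N := p) ?_)⟩
  simpa [traceAddChar, ha] using h

theorem stmt10_general {F : Type*} [Field F] [Fintype F] [DecidableEq F] (p Q k ℓ : ℕ)
    [Fact p.Prime] [Algebra (ZMod p) F]
    (hQ : Fintype.card F = Q) (hk : 2 ≤ k)
    (L : Finset (Fin k → F)) (hL : L.card = ℓ) :
    let e : ZMod p → ℂ := fun t => Complex.exp (2 * Real.pi * Complex.I * (t.val : ℂ) / p)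
    -- the character `χ_{α,β} f = e (tr (β · f(α)))`
    let χ : F → F → (Fin k → F) → ℂ :=
      fun α β f => e (Algebra.trace (ZMod p) F (β * evalc f α))
    ∑ α : F, ∑ β ∈ Finset.univ.filter (fun β : F => β ≠ 0),
        ((Q : ℝ) ^ (-(k : ℝ) / 2) * ‖∑ f ∈ L, χ α β f‖) ^ 2
      ≤ (Q : ℝ) ^ ((1 : ℝ) - k) * ℓ * (Q + ℓ * (k - 1)) := by
  intro e χ
  subst hQ hL
  have hQ : (0 : ℝ) < Fintype.card F := by exact_mod_cast Fintype.card_pos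
  have hterm : ∀ α β : F, ((Fintype.card F : ℝ) ^ (-(k : ℝ) / 2) * ‖∑ f ∈ L, χ α β f‖) ^ 2
      = (Fintype.card F : ℝ) ^ (-(k : ℝ)) * ‖∑ f ∈ L, traceAddChar p F (β * evalc f α)‖ ^ 2 := by
    intro α β
    rw [mul_pow, ← Real.rpow_natCast, ← Real.rpow_mul hQ.le]
    simp only [χ, e, traceAddChar_apply]
    norm_num
  calc _ = (Fintype.card F : ℝ) ^ (-(k : ℝ)) * ∑ α : F, ∑ β ∈ univ.filter (fun β : F => β ≠ 0),
          ‖∑ f ∈ L, traceAddChar p F (β * evalc f α)‖ ^ 2 := by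
        simp_rw [hterm, mul_sum]
    _ ≤ (Fintype.card F : ℝ) ^ (-(k : ℝ)) * ∑ α : F, ∑ β : F,
          ‖∑ f ∈ L, traceAddChar p F (β * evalc f α)‖ ^ 2 := by
        gcongr with α
        exact subset_univ _
    _ ≤ (Fintype.card F : ℝ) ^ (-(k : ℝ)) * (Fintype.card F *
          (#L * Fintype.card F + #L * #L * (k - 1 : ℝ))) := by
        gcongr
        exact sum_sum_norm_sq_sum_evalc_le (isPrimitive_traceAddChar p F) (by omega) L
    _ = _ := by
        rw [sub_eq_add_neg (1 : ℝ), Real.rpow_add hQ, Real.rpow_one]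
        ring

theorem stmt10 {F : Type*} [Field F] [Fintype F] [DecidableEq F] (p Q k ℓ : ℕ)
    [Fact p.Prime] [CharP F p] [Algebra (ZMod p) F]
    (hQ : Fintype.card F = Q) (hk : 2 ≤ k)
    (L : Finset (Fin k → F)) (hL : L.card = ℓ) :
    let e : ZMod p → ℂ := fun t => Complex.exp (2 * Real.pi * Complex.I * (t.val : ℂ) / p)
    -- the character `χ_{α,β} f = e (tr (β · f(α)))`
    let χ : F → F → (Fin k → F) → ℂ :=
      fun α β f => e (Algebra.trace (ZMod p) F (β * evalc f α))
    ∑ α : F, ∑ β ∈ Finset.univ.filter (fun β : F => β ≠ 0),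
        ((Q : ℝ) ^ (-(k : ℝ) / 2) * ‖∑ f ∈ L, χ α β f‖) ^ 2
      ≤ (Q : ℝ) ^ ((1 : ℝ) - k) * ℓ * (Q + ℓ * (k - 1)) :=
  stmt10_general p Q k ℓ hQ hk L hL
end

section
/- Let F be a finite field of order Q, let L be a set of polynomials over F of degree less than k, and let P ⊆ F² be a set of points. Let I(L,P) = |{(f,(x,y)) ∈ L × P : f(x) = y}| be the number of incidences. Then |I(L,P) − |L||P|/Q| ≤ sqrt(|L||P|(Q + |L|(k−1))(1 − 1/Q)). -/
open Finset

open Polynomial in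
lemma stmt11_root_bound {F : Type*} [Field F] [Fintype F] [DecidableEq F] {k : ℕ}
    (c : Fin k → F) (hc : c ≠ 0) :
    (univ.filter fun x => evalc c x = 0).card ≤ k - 1 := by
  set p : F[X] := ∑ i : Fin k, C (c i) * X ^ (i : ℕ) with hp
  have heval : ∀ x, p.eval x = evalc c x := by
    intro x; simp [hp, evalc, eval_finset_sum]
  have hcoeff : ∀ i : Fin k, p.coeff (i : ℕ) = c i := by
    intro i
    simp only [hp, finset_sum_coeff, coeff_C_mul, coeff_X_pow]
    rw [Finset.sum_eq_single i]
    · simp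
    · intro j _ hji
      have : (i : ℕ) ≠ (j : ℕ) := fun h => hji (Fin.val_injective h).symm
      simp [this]
    · simp
  have hpne : p ≠ 0 := by
    intro h0
    apply hc
    funext i
    have := hcoeff i
    rw [h0] at this
    simpa using this.symm
  have hdeg : p.natDegree ≤ k - 1 := by
    apply Polynomial.natDegree_sum_le_of_forall_le
    intro i _
    exact le_trans (natDegree_C_mul_X_pow_le _ _) (Nat.le_sub_one_of_lt i.2)
  have hsub : (univ.filter fun x => evalc c x = 0) ⊆ p.roots.toFinset := by
    intro x hx
    simp only [Finset.mem_filter] at hx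
    rw [Multiset.mem_toFinset, mem_roots hpne]
    exact (heval x).trans hx.2
  calc (univ.filter fun x => evalc c x = 0).card
      ≤ p.roots.toFinset.card := Finset.card_le_card hsub
    _ ≤ Multiset.card p.roots := Multiset.toFinset_card_le _
    _ ≤ p.natDegree := card_roots' p
    _ ≤ k - 1 := hdeg

lemma stmt11_agree_bound {F : Type*} [Field F] [Fintype F] [DecidableEq F] {k : ℕ}
    {c d : Fin k → F} (hcd : c ≠ d) :
    (univ.filter fun x => evalc c x = evalc d x).card ≤ min (k - 1) (Fintype.card F) := by
  refine le_min ?_ ?_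
  · have h1 : (univ.filter fun x => evalc c x = evalc d x)
        = (univ.filter fun x => evalc (c - d) x = 0) := by
      apply Finset.filter_congr
      intro x _
      simp only [evalc, Pi.sub_apply, sub_mul, Finset.sum_sub_distrib]
      constructor <;> intro h
      · rw [h]; simp
      · linear_combination h
    rw [h1]
    exact stmt11_root_bound _ (sub_ne_zero_of_ne hcd)
  · exact le_trans (Finset.card_filter_le _ _) (by simp)

lemma stmt11_sum_N {F : Type*} [Field F] [Fintype F] [DecidableEq F] {k : ℕ}
    (L : Finset (Fin k → F)) :
    ∑ p : F × F, (L.filter fun f => evalc f p.1 = p.2).card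
      = Fintype.card F * L.card := by
  rw [Fintype.sum_prod_type]
  have h : ∀ x : F, ∑ y : F, (L.filter fun f => evalc f x = y).card = L.card := by
    intro x
    exact (Finset.card_eq_sum_card_fiberwise (f := fun f => evalc f x)
      (t := univ) (fun _ _ => Finset.mem_univ _)).symm
  simp [h, Finset.card_univ, mul_comm]

lemma stmt11_sum_N_sq {F : Type*} [Field F] [Fintype F] [DecidableEq F] {k : ℕ}
    (L : Finset (Fin k → F)) :
    ∑ p : F × F, ((L.filter fun f => evalc f p.1 = p.2).card)^2
      ≤ Fintype.card F * L.card
        + (L.card * L.card - L.card) * min (k-1) (Fintype.card F) := by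
  have hsq : ∀ p : F × F, ((L.filter fun f => evalc f p.1 = p.2).card)^2
      = ∑ fg ∈ L ×ˢ L, if evalc fg.1 p.1 = p.2 ∧ evalc fg.2 p.1 = p.2 then 1 else 0 := by
    intro p
    rw [← Finset.card_filter, sq, ← Finset.card_product]
    congr 1
    exact (Finset.filter_product _ _).symm
  calc ∑ p : F × F, ((L.filter fun f => evalc f p.1 = p.2).card)^2
      = ∑ fg ∈ L ×ˢ L, ∑ p : F × F,
          (if evalc fg.1 p.1 = p.2 ∧ evalc fg.2 p.1 = p.2 then 1 else 0) := by
        rw [← Finset.sum_comm]; exact Finset.sum_congr rfl fun p _ => hsq p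
    _ = ∑ fg ∈ L ×ˢ L, (univ.filter fun x => evalc fg.1 x = evalc fg.2 x).card := by
        refine Finset.sum_congr rfl fun fg _ => ?_
        rw [Fintype.sum_prod_type, Finset.card_filter]
        refine Finset.sum_congr rfl fun x _ => ?_
        by_cases h : evalc fg.1 x = evalc fg.2 x
        · rw [if_pos h, Finset.sum_eq_single (evalc fg.1 x)]
          · rw [if_pos ⟨rfl, h.symm⟩]
          · intro y _ hy
            rw [if_neg]; rintro ⟨h1, _⟩; exact hy h1.symm
          · simp
        · rw [if_neg h, Finset.sum_eq_zero]
          intro y _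
          rw [if_neg]; rintro ⟨h1, h2⟩; exact h (h1.trans h2.symm)
    _ ≤ Fintype.card F * L.card
        + (L.card * L.card - L.card) * min (k-1) (Fintype.card F) := by
        rw [← Finset.diag_union_offDiag L, Finset.sum_union (Finset.disjoint_diag_offDiag L)]
        gcongr ?_ + ?_
        · rw [Finset.sum_diag]
          apply le_of_eq
          rw [Finset.sum_congr rfl (fun f _ => ?_), Finset.sum_const, smul_eq_mul, mul_comm]
          simp
        · calc ∑ fg ∈ L.offDiag, (univ.filter fun x => evalc fg.1 x = evalc fg.2 x).card
              ≤ L.offDiag.card * min (k-1) (Fintype.card F) := by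
                rw [← smul_eq_mul]
                apply Finset.sum_le_card_nsmul
                intro fg hfg
                exact stmt11_agree_bound (Finset.mem_offDiag.mp hfg).2.2
            _ = (L.card * L.card - L.card) * min (k-1) (Fintype.card F) := by
                rw [Finset.offDiag_card]

lemma stmt11_key (l q a m : ℝ) (hl : 1 ≤ l) (hq : 1 ≤ q) (ha : 1 ≤ a) (hm1 : 1 ≤ m)
    (hma : m ≤ a) (hmq : m ≤ q) (hmin : m = a ∨ m = q) :
    q*l + (l*l - l)*m - l^2 ≤ l*(q + l*a)*(1 - 1/q) := by
  rw [show l*(q + l*a)*(1 - 1/q) = l*(q+l*a)*(q-1)/q by field_simp; try ring,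
    le_div_iff₀ (by linarith)]
  rcases hmin with h | h <;> subst h
  · nlinarith [mul_nonneg (by linarith : (0:ℝ) ≤ l)
        (mul_nonneg (by linarith : (0:ℝ) ≤ q) (by linarith : (0:ℝ) ≤ m - 1)),
      mul_nonneg (by linarith : (0:ℝ) ≤ l)
        (mul_nonneg (by linarith : (0:ℝ) ≤ l) (by linarith : (0:ℝ) ≤ q - m))]
  · nlinarith [mul_nonneg (mul_nonneg (by linarith : (0:ℝ) ≤ m - 1) (by linarith : (0:ℝ) ≤ l))
        (mul_nonneg (by linarith : (0:ℝ) ≤ a) (by linarith : (0:ℝ) ≤ l - 1)),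
      mul_nonneg (mul_nonneg (by linarith : (0:ℝ) ≤ m - 1) (by linarith : (0:ℝ) ≤ l))
        (by nlinarith [mul_nonneg (by linarith : (0:ℝ) ≤ a - m) (by linarith : (0:ℝ) ≤ l)] : (0:ℝ) ≤ a*l - m*(l-1))]

theorem stmt11 {F : Type*} [Field F] [Fintype F] [DecidableEq F] (Q k : ℕ)
    (hQ : Fintype.card F = Q) (hk : 2 ≤ k)
    (L : Finset (Fin k → F)) (P : Finset (F × F)) :
    -- I(L,P) is the number of incidences between polynomials in L and points in P
    |((((L ×ˢ P).filter (fun t : (Fin k → F) × (F × F) =>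
          evalc t.1 t.2.1 = t.2.2)).card : ℝ)
        - (L.card : ℝ) * P.card / Q)|
      ≤ Real.sqrt ((L.card : ℝ) * P.card * (Q + L.card * (k - 1)) * (1 - 1 / Q)) := by
  subst hQ
  have hQ1 : 1 ≤ Fintype.card F := Fintype.card_pos
  rcases Finset.eq_empty_or_nonempty L with hL | hL
  · subst hL; simp [Real.sqrt_nonneg]
  -- notation
  set N : F × F → ℕ := fun p => (L.filter fun f => evalc f p.1 = p.2).card with hN
  set q : ℝ := ((Fintype.card F : ℕ) : ℝ) with hqdef
  set l : ℝ := (L.card : ℝ) with hldef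
  set pp : ℝ := (P.card : ℝ) with hppdef
  have hq1 : (1:ℝ) ≤ q := by rw [hqdef]; exact_mod_cast hQ1
  have hq0 : q ≠ 0 := by linarith
  have hl1 : (1:ℝ) ≤ l := by
    rw [hldef]; exact_mod_cast Finset.card_pos.mpr hL
  set m : ℝ := ((min (k-1) (Fintype.card F) : ℕ) : ℝ) with hmdef
  set a : ℝ := (k : ℝ) - 1 with hadef
  have hka : ((k - 1 : ℕ) : ℝ) = a := by
    rw [hadef]; push_cast [Nat.cast_sub (by omega : 1 ≤ k)]; ring
  have ha1 : (1:ℝ) ≤ a := by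
    rw [hadef]
    have : (2:ℝ) ≤ (k:ℝ) := by exact_mod_cast hk
    linarith
  have hm1 : (1:ℝ) ≤ m := by
    rw [hmdef]
    have : 1 ≤ min (k-1) (Fintype.card F) := le_min (by omega) hQ1
    exact_mod_cast this
  have hma : m ≤ a := by rw [hmdef, ← hka]; exact_mod_cast min_le_left _ _
  have hmq : m ≤ q := by rw [hmdef, hqdef]; exact_mod_cast min_le_right _ _
  have hmin : m = a ∨ m = q := by
    rcases min_choice (k-1) (Fintype.card F) with h | h
    · left; rw [hmdef, h, hka]
    · right; rw [hmdef, h, hqdef]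
  -- incidence count
  have hA : ((L ×ˢ P).filter (fun t : (Fin k → F) × (F × F) =>
      evalc t.1 t.2.1 = t.2.2)).card = ∑ p ∈ P, N p := by
    rw [Finset.card_filter, Finset.sum_product, Finset.sum_comm]
    exact Finset.sum_congr rfl fun p _ => (Finset.card_filter _ _).symm
  have hB : ∑ p : F × F, ((N p : ℝ)) = q * l := by
    rw [hqdef, hldef]
    exact_mod_cast stmt11_sum_N L
  have hcardprod : (Fintype.card (F × F) : ℝ) = q * q := by
    rw [Fintype.card_prod]; push_cast [hqdef]; ring
  set μ : ℝ := l / q with hμdef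
  set g : F × F → ℝ := fun p => (N p : ℝ) - μ with hg
  have hsum_g : ((((L ×ˢ P).filter (fun t : (Fin k → F) × (F × F) =>
        evalc t.1 t.2.1 = t.2.2)).card : ℝ) - l * pp / q) = ∑ p ∈ P, g p := by
    rw [hA, hg]
    push_cast
    rw [Finset.sum_sub_distrib, Finset.sum_const, nsmul_eq_mul, hμdef, hppdef]
    ring
  -- variance computation
  have hvar : ∑ p : F × F, g p ^ 2 = (∑ p : F × F, ((N p : ℝ))^2) - l^2 := by
    have h1 : ∀ p : F × F, g p ^ 2 = (N p : ℝ)^2 - 2*μ*(N p) + μ^2 := by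
      intro p; rw [hg]; ring
    rw [Finset.sum_congr rfl fun p _ => h1 p]
    rw [Finset.sum_add_distrib, Finset.sum_sub_distrib, ← Finset.mul_sum, hB,
      Finset.sum_const, Finset.card_univ, nsmul_eq_mul, hcardprod, hμdef]
    field_simp
    ring
  have hS2 : (∑ p : F × F, ((N p : ℝ))^2) ≤ q*l + (l*l - l)*m := by
    have hC := stmt11_sum_N_sq L
    have hcast : ((Fintype.card F * L.card
        + (L.card * L.card - L.card) * min (k-1) (Fintype.card F) : ℕ) : ℝ)
        = q*l + (l*l - l)*m := by
      have hle : L.card ≤ L.card * L.card := Nat.le_mul_of_pos_left _ (Finset.card_pos.mpr hL)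
      push_cast [Nat.cast_sub hle, hqdef, hldef, hmdef]
      ring
    calc (∑ p : F × F, ((N p : ℝ))^2)
        = ((∑ p : F × F, (N p)^2 : ℕ) : ℝ) := by push_cast; rfl
      _ ≤ _ := by exact_mod_cast hC
      _ = q*l + (l*l - l)*m := hcast
  -- Cauchy-Schwarz and conclusion
  rw [hsum_g]
  apply Real.abs_le_sqrt
  have hCS : (∑ p ∈ P, g p)^2 ≤ pp * ∑ p ∈ P, g p ^ 2 := by
    have := Finset.sum_mul_sq_le_sq_mul_sq P (fun _ => (1:ℝ)) g
    simpa [hppdef] using this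
  have hmono : ∑ p ∈ P, g p ^ 2 ≤ ∑ p : F × F, g p ^ 2 :=
    Finset.sum_le_sum_of_subset_of_nonneg (Finset.subset_univ P)
      (fun i _ _ => sq_nonneg _)
  have hpp0 : (0:ℝ) ≤ pp := by rw [hppdef]; positivity
  have hkey := stmt11_key l q a m hl1 hq1 ha1 hm1 hma hmq hmin
  calc (∑ p ∈ P, g p)^2
      ≤ pp * ∑ p ∈ P, g p ^ 2 := hCS
    _ ≤ pp * ((∑ p : F × F, ((N p : ℝ))^2) - l^2) := by
        rw [← hvar]; exact mul_le_mul_of_nonneg_left hmono hpp0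
    _ ≤ pp * (q*l + (l*l - l)*m - l^2) := by
        apply mul_le_mul_of_nonneg_left _ hpp0; linarith
    _ ≤ pp * (l*(q + l*a)*(1 - 1/q)) := mul_le_mul_of_nonneg_left hkey hpp0
    _ = l * pp * (q + l * a) * (1 - 1/q) := by ring
end

section
/- Let F be a finite field of order Q, let L be a set of polynomials over F of degree less than k, and P ⊆ F² a set of points. Then the number of incidences I(L,P) satisfies I(L,P) ≤ |L||P|/Q + sqrt(|L||P|(Q + |L|k)). -/
/-!
Write `N p` for the number of curves of `L` through the point `p`, so that the incidence count
is `∑ p ∈ P, N p`. Over the whole plane `F²`, `N` has total `|L| Q` (every graph has `Q` points),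
hence mean `|L| / Q`, and second moment `∑ f ∈ L, ∑ g ∈ L, #{x | f x = g x} ≤ |L| Q + |L|² k`,
because two distinct polynomials of degree `< k` agree at fewer than `k` points. Applying
Cauchy–Schwarz to the deviation `N - |L| / Q` over `P` gives the bound. Only the agreement count
uses polynomials; the rest holds for graphs of arbitrary functions `α → β`.
-/

open Finset

open Polynomial

theorem evalc_eq_eval_degreeLTEquiv_symm {R : Type*} [CommRing R] {k : ℕ} (c : Fin k → R)
    (x : R) : evalc c x = ((degreeLTEquiv R k).symm c : R[X]).eval x := by
  rw [eval_eq_sum_degreeLTEquiv (Submodule.coe_mem _)]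
  simp [evalc]

theorem card_filter_evalc_eq_evalc_lt {R : Type*} [CommRing R] [IsDomain R] [Fintype R]
    [DecidableEq R] {k : ℕ} {f g : Fin k → R} (hfg : f ≠ g) :
    #{x | evalc f x = evalc g x} < k := by
  by_contra! hk
  refine hfg <| (degreeLTEquiv R k).symm.injective <| Subtype.ext <|
    eq_of_degree_sub_lt_of_eval_finset_eq (s := {x | evalc f x = evalc g x}) ?_ fun x hx => ?_
  · refine (mem_degreeLT.1 ?_).trans_le (by exact_mod_cast hk)
    exact Submodule.sub_mem _ (Submodule.coe_mem _) (Submodule.coe_mem _)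
  · simpa only [evalc_eq_eval_degreeLTEquiv_symm] using (mem_filter.1 hx).2

theorem Finset.sum_sq_sub_le_sum_sq {γ : Type*} {s : Finset γ} (x : γ → ℝ) {m : ℝ}
    (hm : ∑ i ∈ s, x i = #s * m) : ∑ i ∈ s, (x i - m) ^ 2 ≤ ∑ i ∈ s, x i ^ 2 := by
  have expand : ∑ i ∈ s, (x i - m) ^ 2 = ∑ i ∈ s, x i ^ 2 - #s * m ^ 2 := by
    simp only [sub_sq, sum_add_distrib, sum_sub_distrib, ← sum_mul, ← mul_sum, sum_const,
      nsmul_eq_mul, hm]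
    ring
  rw [expand]
  have : (0 : ℝ) ≤ #s * m ^ 2 := by positivity
  linarith

theorem Finset.sum_le_sqrt_card_mul_sum_sq {γ : Type*} [Fintype γ] (s : Finset γ) (y : γ → ℝ) :
    ∑ i ∈ s, y i ≤ √(#s * ∑ i, y i ^ 2) := by
  refine (le_abs_self _).trans (Real.abs_le_sqrt (sq_sum_le_card_mul_sum_sq.trans ?_))
  exact mul_le_mul_of_nonneg_left (sum_le_univ_sum_of_nonneg fun _ => sq_nonneg _) (by positivity)

section Incidences

variable {ι α β : Type*} [DecidableEq β]

def curvesThrough (e : ι → α → β) (L : Finset ι) (p : α × β) : ℕ :=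
  #{f ∈ L | e f p.1 = p.2}

theorem card_incidences_eq_sum_curvesThrough (e : ι → α → β) (L : Finset ι)
    (P : Finset (α × β)) :
    #{t ∈ L ×ˢ P | e t.1 t.2.1 = t.2.2} = ∑ p ∈ P, curvesThrough e L p := by
  rw [card_filter, sum_product_right]
  simp only [curvesThrough, card_filter]

variable [Fintype α] [Fintype β]

theorem sum_curvesThrough (e : ι → α → β) (L : Finset ι) :
    ∑ p, curvesThrough e L p = #L * Fintype.card α := by
  have card_graph (f : ι) : #{p : α × β | e f p.1 = p.2} = Fintype.card α := by
    rw [card_filter, Fintype.sum_prod_type]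
    simp
  simp only [curvesThrough, card_filter]
  rw [sum_comm]
  simp only [← card_filter, card_graph, sum_const, smul_eq_mul]

theorem sum_curvesThrough_sq (e : ι → α → β) (L : Finset ι) :
    ∑ p, curvesThrough e L p ^ 2 = ∑ f ∈ L, ∑ g ∈ L, #{x | e f x = e g x} := by
  simp only [curvesThrough, card_filter, sq, sum_mul_sum]
  rw [sum_comm]
  refine sum_congr rfl fun f _ => ?_
  rw [sum_comm]
  refine sum_congr rfl fun g _ => ?_
  rw [Fintype.sum_prod_type]
  refine sum_congr rfl fun x _ => ?_
  rw [sum_eq_single (e f x)]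
  · simp [eq_comm]
  · intro y _ hy
    simp [Ne.symm hy]
  · simp

theorem sum_curvesThrough_sq_le {e : ι → α → β} {L : Finset ι} {k : ℕ}
    (hk : ∀ f ∈ L, ∀ g ∈ L, f ≠ g → #{x | e f x = e g x} ≤ k) :
    ∑ p, curvesThrough e L p ^ 2 ≤ #L * (Fintype.card α + #L * k) := by
  classical
  rw [sum_curvesThrough_sq]
  calc ∑ f ∈ L, ∑ g ∈ L, #{x | e f x = e g x}
      ≤ ∑ f ∈ L, ∑ g ∈ L, ((if f = g then Fintype.card α else 0) + k) := by
        gcongr with f hf g hg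
        by_cases hfg : f = g
        · simp [hfg]
        · simpa [hfg] using hk f hf g hg hfg
    _ = #L * (Fintype.card α + #L * k) := by
        refine (sum_congr rfl fun f hf => ?_).trans (by rw [sum_const, smul_eq_mul])
        rw [sum_add_distrib, sum_ite_eq, if_pos hf, sum_const, smul_eq_mul]

theorem card_incidences_le [Nonempty β] (e : ι → α → β) (L : Finset ι) (P : Finset (α × β))
    {k : ℕ} (hk : ∀ f ∈ L, ∀ g ∈ L, f ≠ g → #{x | e f x = e g x} ≤ k) :
    (#{t ∈ L ×ˢ P | e t.1 t.2.1 = t.2.2} : ℝ)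
      ≤ #L * #P / Fintype.card β + √(#L * #P * (Fintype.card α + #L * k)) := by
  set N : α × β → ℝ := fun p => curvesThrough e L p
  set m : ℝ := #L / Fintype.card β
  have sum_N : ∑ p, N p = #(univ : Finset (α × β)) * m := by
    have hβ : (Fintype.card β : ℝ) ≠ 0 := by positivity
    simp only [N, m, ← Nat.cast_sum, sum_curvesThrough, card_univ, Fintype.card_prod]
    push_cast
    field_simp
  have sum_N_sq : ∑ p, N p ^ 2 ≤ (#L : ℝ) * (Fintype.card α + #L * k) := by
    simp only [N]
    exact_mod_cast sum_curvesThrough_sq_le hk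
  calc (#{t ∈ L ×ˢ P | e t.1 t.2.1 = t.2.2} : ℝ)
      = #L * #P / Fintype.card β + ∑ p ∈ P, (N p - m) := by
        rw [card_incidences_eq_sum_curvesThrough, sum_sub_distrib, sum_const, nsmul_eq_mul]
        push_cast
        ring
    _ ≤ #L * #P / Fintype.card β + √(#P * ∑ p, (N p - m) ^ 2) := by
        gcongr
        exact sum_le_sqrt_card_mul_sum_sq P _
    _ ≤ #L * #P / Fintype.card β + √(#L * #P * (Fintype.card α + #L * k)) := by
        refine add_le_add_right (Real.sqrt_le_sqrt ?_) _
        calc (#P : ℝ) * ∑ p, (N p - m) ^ 2 ≤ #P * (#L * (Fintype.card α + #L * k)) := by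
              gcongr
              exact (sum_sq_sub_le_sum_sq N sum_N).trans sum_N_sq
          _ = #L * #P * (Fintype.card α + #L * k) := by ring

end Incidences

theorem stmt12 {F : Type*} [Field F] [Fintype F] [DecidableEq F] (Q k : ℕ)
    (hQ : Fintype.card F = Q)
    (L : Finset (Fin k → F)) (P : Finset (F × F)) :
    ((((L ×ˢ P).filter (fun t : (Fin k → F) × (F × F) =>
          evalc t.1 t.2.1 = t.2.2)).card : ℝ)
      ≤ (L.card : ℝ) * P.card / Q
        + Real.sqrt ((L.card : ℝ) * P.card * (Q + L.card * k))) := by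
  subst hQ
  exact card_incidences_le evalc L P fun f _ g _ hfg => (card_filter_evalc_eq_evalc_lt hfg).le
end

section
/- Let F be a finite field of order Q, let L be a set of affine lines in F² (graphs of polynomials of degree less than 2), and let P ⊆ F² be a set of points. Then |I(P,L) − |P||L|/Q| ≤ sqrt(|P||L|Q)·(1 − 1/Q), where I(P,L) counts the incident point-line pairs. -/
/-!
Write `q = |F|`. A line `y = a x + b` meets every column `{x} × F` in exactly one point, so the
defect `v p = ∑ ℓ ∈ L, (1[p ∈ ℓ] - 1/q)` (`lineDefect`) sums to zero on each column. Hence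
`I(P,L) - |P||L|/q = ∑ p ∈ P, v p = ⟨u, v⟩`, where `u` (`columnCentered`) is the indicator of
`P` minus its column averages, and Cauchy–Schwarz finishes the proof once we know
`‖u‖² ≤ |P| (1 - 1/q)` and `‖v‖² ≤ |L| (q - 1)`. The latter holds because two distinct lines
share at most one point, so every off-diagonal term `⟨1_ℓ - 1/q, 1_ℓ' - 1/q⟩ = |ℓ ∩ ℓ'| - 1`
of `‖v‖²` is nonpositive.
-/

open Finset

section ColumnCentering

variable {X Y : Type*} [Fintype X] [Fintype Y] [DecidableEq X] [DecidableEq Y]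

lemma sum_indicator_sub_density_sq (S : Finset Y) :
    ∑ y, ((if y ∈ S then 1 else 0) - (#S : ℝ) / Fintype.card Y) ^ 2
      = #S - (#S : ℝ) ^ 2 / Fintype.card Y := by
  have hsq : ∀ y, ((if y ∈ S then 1 else 0) - (#S : ℝ) / Fintype.card Y) ^ 2
      = (if y ∈ S then 1 else 0) * (1 - 2 * (#S : ℝ) / Fintype.card Y)
        + ((#S : ℝ) / Fintype.card Y) ^ 2 := by
    intro y
    split_ifs <;> ring
  simp only [hsq, sum_add_distrib, ← sum_mul, sum_boole, sum_const, card_univ, nsmul_eq_mul,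
    filter_mem_eq_inter, univ_inter]
  rcases eq_or_ne (Fintype.card Y : ℝ) 0 with hY | hY
  · simp [hY]
  · field_simp
    ring

lemma sub_sq_div_le_mul_one_sub_inv (m n : ℕ) :
    (m : ℝ) - (m : ℝ) ^ 2 / n ≤ m * (1 - 1 / n) := by
  have hm : (m : ℝ) ≤ (m : ℝ) ^ 2 := by exact_mod_cast Nat.le_self_pow two_ne_zero m
  have : (m : ℝ) / n ≤ (m : ℝ) ^ 2 / n := by gcongr
  linarith [show (m : ℝ) * (1 - 1 / n) = m - m / n by ring]

noncomputable def columnCentered (P : Finset (X × Y)) (p : X × Y) : ℝ :=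
  (if p ∈ P then 1 else 0) - (#{y | (p.1, y) ∈ P} : ℝ) / Fintype.card Y

lemma sum_mem_eq_sum_columnCentered_mul {v : X × Y → ℝ} (hv : ∀ x, ∑ y, v (x, y) = 0)
    (P : Finset (X × Y)) :
    ∑ p ∈ P, v p = ∑ p, columnCentered P p * v p := by
  simp only [columnCentered, sub_mul, sum_sub_distrib, ite_mul, one_mul, zero_mul,
    sum_ite_mem, univ_inter, Fintype.sum_prod_type (f := fun p => _ / _ * v p), ← mul_sum, hv,
    mul_zero, sum_const_zero, sub_zero]

lemma sum_card_column (P : Finset (X × Y)) :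
    ∑ x, (#{y | (x, y) ∈ P} : ℝ) = #P := by
  simp only [← sum_boole]
  rw [← Fintype.sum_prod_type (f := fun p => if p ∈ P then (1 : ℝ) else 0), sum_boole,
    filter_mem_eq_inter, univ_inter]

lemma sum_columnCentered_sq_le (P : Finset (X × Y)) :
    ∑ p, columnCentered P p ^ 2 ≤ #P * (1 - 1 / Fintype.card Y) := by
  have hcol : ∀ x, ∑ y, columnCentered P (x, y) ^ 2
      = #{y | (x, y) ∈ P} - (#{y | (x, y) ∈ P} : ℝ) ^ 2 / Fintype.card Y := by
    intro x
    rw [← sum_indicator_sub_density_sq]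
    simp [columnCentered]
  calc ∑ p, columnCentered P p ^ 2
      = ∑ x, ((#{y | (x, y) ∈ P} : ℝ) - (#{y | (x, y) ∈ P} : ℝ) ^ 2 / Fintype.card Y) := by
        rw [Fintype.sum_prod_type]
        exact sum_congr rfl fun x _ => hcol x
    _ ≤ ∑ x, (#{y | (x, y) ∈ P} : ℝ) * (1 - 1 / Fintype.card Y) :=
        sum_le_sum fun x _ => sub_sq_div_le_mul_one_sub_inv _ _
    _ = #P * (1 - 1 / Fintype.card Y) := by rw [← sum_mul, sum_card_column]

end ColumnCentering

section Lines

variable {F : Type*} [Field F] [Fintype F] [DecidableEq F]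

noncomputable def incidence (p l : F × F) : ℝ :=
  if p.2 = l.1 * p.1 + l.2 then 1 else 0

lemma sum_incidence_column (l : F × F) (x : F) : ∑ y, incidence (x, y) l = 1 := by
  simp [incidence]

lemma sum_incidence (l : F × F) : ∑ p, incidence p l = Fintype.card F := by
  simp [Fintype.sum_prod_type, sum_incidence_column]

lemma card_filter_lines_meet_le_one {l l' : F × F} (h : l ≠ l') :
    #{x | l.1 * x + l.2 = l'.1 * x + l'.2} ≤ 1 := by
  refine card_le_one.2 fun a ha b hb => ?_
  simp only [mem_filter, mem_univ, true_and] at ha hb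
  have hslope : l.1 ≠ l'.1 := by
    rintro hslope
    rw [hslope, add_right_inj] at ha
    exact h (Prod.ext hslope ha)
  refine mul_left_cancel₀ (sub_ne_zero.2 hslope) ?_
  linear_combination ha - hb

lemma sum_incidence_mul_incidence_le (l l' : F × F) :
    ∑ p, incidence p l * incidence p l' ≤ if l = l' then (Fintype.card F : ℝ) else 1 := by
  split_ifs with h
  · subst h
    have hidem : ∀ p, incidence p l * incidence p l = incidence p l := by
      intro p
      unfold incidence
      split_ifs <;> norm_num
    simp only [hidem, sum_incidence, le_refl]
  · have hcol : ∀ x, ∑ y, incidence (x, y) l * incidence (x, y) l'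
        = if l.1 * x + l.2 = l'.1 * x + l'.2 then 1 else 0 := by
      intro x
      split_ifs with hx
      · simp [incidence, hx]
      · simp [incidence, Ne.symm hx, ← ite_and]
    rw [Fintype.sum_prod_type]
    simp only [hcol, sum_boole]
    exact_mod_cast card_filter_lines_meet_le_one h

noncomputable def lineDefect (L : Finset (F × F)) (p : F × F) : ℝ :=
  ∑ l ∈ L, (incidence p l - 1 / Fintype.card F)

lemma sum_lineDefect_column (L : Finset (F × F)) (x : F) : ∑ y, lineDefect L (x, y) = 0 := by
  have hq : (Fintype.card F : ℝ) ≠ 0 := Nat.cast_ne_zero.2 Fintype.card_ne_zero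
  simp only [lineDefect]
  rw [sum_comm]
  refine sum_eq_zero fun l _ => ?_
  rw [sum_sub_distrib, sum_incidence_column, sum_const, card_univ, nsmul_eq_mul,
    mul_one_div_cancel hq, sub_self]

lemma sum_incidence_sub_mul_incidence_sub (l l' : F × F) :
    ∑ p, (incidence p l - 1 / Fintype.card F) * (incidence p l' - 1 / Fintype.card F)
      = ∑ p, incidence p l * incidence p l' - 1 := by
  have hq : (Fintype.card F : ℝ) ≠ 0 := Nat.cast_ne_zero.2 Fintype.card_ne_zero
  simp only [sub_mul, mul_sub, sum_sub_distrib, ← sum_mul, ← mul_sum, sum_incidence, sum_const,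
    card_univ, Fintype.card_prod, nsmul_eq_mul, Nat.cast_mul]
  field_simp
  ring

lemma sum_lineDefect_sq_le (L : Finset (F × F)) :
    ∑ p, lineDefect L p ^ 2 ≤ #L * ((Fintype.card F : ℝ) - 1) := by
  calc ∑ p, lineDefect L p ^ 2
      = ∑ l ∈ L, ∑ l' ∈ L, (∑ p, incidence p l * incidence p l' - 1) := by
        simp only [lineDefect, sq, sum_mul_sum]
        rw [sum_comm]
        refine sum_congr rfl fun l _ => ?_
        rw [sum_comm]
        exact sum_congr rfl fun l' _ => sum_incidence_sub_mul_incidence_sub l l'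
    _ ≤ ∑ l ∈ L, ∑ l' ∈ L, (if l = l' then (Fintype.card F : ℝ) - 1 else 0) := by
        refine sum_le_sum fun l _ => sum_le_sum fun l' _ => ?_
        have := sum_incidence_mul_incidence_le l l'
        split_ifs at this ⊢ <;> linarith
    _ = #L * ((Fintype.card F : ℝ) - 1) := by
        simp [sum_ite_eq, mul_sub]

lemma card_incidences_sub_eq_sum_lineDefect (P L : Finset (F × F)) :
    (#{t ∈ P ×ˢ L | t.1.2 = t.2.1 * t.1.1 + t.2.2} : ℝ) - #P * #L / Fintype.card F
      = ∑ p ∈ P, lineDefect L p := by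
  simp only [lineDefect, card_filter, Nat.cast_sum, sum_product, sum_sub_distrib, sum_const,
    nsmul_eq_mul, incidence]
  push_cast
  ring

end Lines

theorem stmt13 {F : Type*} [Field F] [Fintype F] [DecidableEq F] (Q : ℕ)
    (hQ : Fintype.card F = Q)
    (P : Finset (F × F)) (L : Finset (F × F)) :
    -- a line is (a, b), i.e. the graph of y = a·x + b; I(P,L) counts incident pairs
    |((((P ×ˢ L).filter (fun t : (F × F) × (F × F) =>
          t.1.2 = t.2.1 * t.1.1 + t.2.2)).card : ℝ)
        - (P.card : ℝ) * L.card / Q)|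
      ≤ Real.sqrt ((P.card : ℝ) * L.card * Q) * (1 - 1 / Q) := by
  subst hQ
  have hq : (1 : ℝ) ≤ Fintype.card F := by exact_mod_cast Fintype.card_pos
  have hdensity : 0 ≤ 1 - 1 / (Fintype.card F : ℝ) :=
    sub_nonneg.2 ((div_le_one (by positivity)).2 hq)
  rw [card_incidences_sub_eq_sum_lineDefect,
    sum_mem_eq_sum_columnCentered_mul (sum_lineDefect_column L)]
  calc _ ≤ √((∑ p, columnCentered P p ^ 2) * ∑ p, lineDefect L p ^ 2) :=
        Real.abs_le_sqrt (sum_mul_sq_le_sq_mul_sq _ _ _)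
    _ ≤ √((#P * (1 - 1 / Fintype.card F)) * (#L * ((Fintype.card F : ℝ) - 1))) := by
        gcongr
        · exact sum_columnCentered_sq_le P
        · exact sum_lineDefect_sq_le L
    _ = √(#P * #L * Fintype.card F * (1 - 1 / Fintype.card F) ^ 2) := by
        congr 1
        field_simp
    _ = √(#P * #L * Fintype.card F) * (1 - 1 / Fintype.card F) := by
        rw [Real.sqrt_mul (by positivity), Real.sqrt_sq hdensity]
end

section
/- Let F be a finite field of order Q and k ≥ 2. The number of additive characters χ_v of F^k (v ∈ F^k) for which there exists α ∈ F with χ_v(x·f) = χ_v(α·f) for all polynomials f of degree < k−1, excluding the trivial character, is exactly Q(Q−1); and for all remaining Q^k − Q(Q−1) − 1 nontrivial characters χ_v, the eigenvalue ⟨z, χ_v⟩ of convolution by the root-counting function z is 0. -/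
/-!
Since `ψ = stdAddChar ∘ trace` is primitive, the condition on `χ_v` says exactly that
`v (j+1) = α * v j` for all `j`, i.e. `v = c • (1, α, …, α^(k-1))` with `c ≠ 0`; for `k ≥ 2` the
pair `(c, α)` is read off the first two coordinates, which gives `Q (Q - 1)` characters.

For the eigenvalue, detect roots by `Q • [g(α) = 0] = ∑ₜ ψ(t g(α))` and write
`t g(α) = ⟨t (α^i)ᵢ, g⟩`. Then `Q ⟨z, χ_v⟩ = ∑_{α,t} ∑_g ψ(⟨t (α^i)ᵢ - v, g⟩)`, and each inner sum
is a complete character sum, which vanishes unless `v = t (α^i)ᵢ`.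
-/

open Finset

namespace AddChar.IsPrimitive

variable {F : Type*} [Field F]

lemma eq_of_forall_apply_dotProduct_eq {R : Type*} [CommMonoid R] {ψ : AddChar F R}
    (hψ : ψ.IsPrimitive) {ι : Type*} [Fintype ι] {a b : ι → F}
    (h : ∀ f : ι → F, ψ (a ⬝ᵥ f) = ψ (b ⬝ᵥ f)) : a = b := by
  classical
  refine funext fun j => to_mulShift_inj_of_isPrimitive hψ (AddChar.ext _ _ fun x => ?_)
  simpa only [mulShift_apply, dotProduct_single] using h (Pi.single j x)

lemma sum_dotProduct_eq_zero [Fintype F] {R : Type*} [CommRing R] [IsDomain R]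
    {ψ : AddChar F R} (hψ : ψ.IsPrimitive) {ι : Type*} [Fintype ι] [DecidableEq ι]
    {w : ι → F} (hw : w ≠ 0) : ∑ g : ι → F, ψ (w ⬝ᵥ g) = 0 := by
  obtain ⟨j, hj⟩ := Function.ne_iff.1 hw
  obtain ⟨x, hx⟩ := DFunLike.ne_iff.1 (hψ hj)
  refine sum_eq_zero_of_ne_one
    (ψ := ψ.compAddMonoidHom (AddMonoidHom.mk' (w ⬝ᵥ ·) (dotProduct_add w))) fun h => hx ?_
  simpa [dotProduct_single] using DFunLike.congr_fun h (Pi.single j x)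

end AddChar.IsPrimitive

lemma isPrimitive_stdAddChar_comp_trace (p : ℕ) [Fact p.Prime] (F : Type*) [Field F] [Finite F]
    [Algebra (ZMod p) F] :
    ((ZMod.stdAddChar (N := p)).compAddMonoidHom
      (Algebra.trace (ZMod p) F).toAddMonoidHom).IsPrimitive := by
  refine AddChar.IsPrimitive.of_ne_one fun h => ?_
  obtain ⟨x, hx⟩ := Algebra.trace_surjective (ZMod p) F 1
  have h1 : ZMod.stdAddChar (1 : ZMod p) = ZMod.stdAddChar (0 : ZMod p) := by
    simpa [hx] using DFunLike.congr_fun h x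
  exact one_ne_zero (ZMod.injective_stdAddChar h1)

section Reindex

variable {F : Type*} [NonUnitalNonAssocSemiring F] {k : ℕ}

lemma dotProduct_shiftc (v : Fin k → F) (f : Fin (k - 1) → F) :
    v ⬝ᵥ shiftc f = (fun j : Fin (k - 1) => v ⟨j + 1, by omega⟩) ⬝ᵥ f := by
  refine (Fintype.sum_of_injective (fun j : Fin (k - 1) => (⟨j + 1, by omega⟩ : Fin k))
    (fun a b h => by simpa [Fin.ext_iff] using h) _ _ (fun i hi => ?_)
    (fun j => by simp [shiftc])).symm
  rw [shiftc, dif_neg, mul_zero]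
  rintro ⟨h0, h1⟩
  exact hi ⟨⟨i - 1, h1⟩, Fin.ext (by simp only; omega)⟩

lemma dotProduct_embedc (v : Fin k → F) (f : Fin (k - 1) → F) :
    v ⬝ᵥ embedc f = (fun j : Fin (k - 1) => v ⟨j, by omega⟩) ⬝ᵥ f := by
  refine (Fintype.sum_of_injective (fun j : Fin (k - 1) => (⟨j, by omega⟩ : Fin k))
    (fun a b h => by simpa [Fin.ext_iff] using h) _ _ (fun i hi => ?_)
    (fun j => by simp [embedc])).symm
  rw [embedc, dif_neg, mul_zero]
  exact fun h => hi ⟨⟨i, h⟩, rfl⟩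

end Reindex

lemma shiftc_condition_iff {F R : Type*} [Field F] [CommMonoid R] {ψ : AddChar F R}
    (hψ : ψ.IsPrimitive) {k : ℕ} (v : Fin k → F) (α : F) :
    (∀ f : Fin (k - 1) → F, ψ (v ⬝ᵥ shiftc f) = ψ (v ⬝ᵥ (α • embedc f))) ↔
      ∀ j : Fin (k - 1), v ⟨j + 1, by omega⟩ = α * v ⟨j, by omega⟩ := by
  simp only [dotProduct_smul, dotProduct_shiftc, dotProduct_embedc, ← smul_dotProduct]
  refine ⟨fun h j => congrFun (hψ.eq_of_forall_apply_dotProduct_eq h) j, fun h f => ?_⟩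
  congr 2
  exact funext h

def geomVec {M : Type*} [Monoid M] {k : ℕ} (c α : M) : Fin k → M :=
  fun i => c * α ^ (i : ℕ)

section GeomVec

variable {F : Type*} {k : ℕ}

lemma geomVec_zero_left [MonoidWithZero F] (α : F) : geomVec (k := k) 0 α = 0 :=
  funext fun _ => zero_mul _

lemma mul_evalc_eq_geomVec_dotProduct [CommSemiring F] (g : Fin k → F) (t α : F) :
    t * evalc g α = geomVec t α ⬝ᵥ g := by
  simp only [evalc, dotProduct, geomVec, mul_sum]
  exact sum_congr rfl fun i _ => by ring

lemma eq_geomVec_of_succ_eq_mul [CommMonoid F] (hk : 0 < k) {v : Fin k → F} {α : F}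
    (h : ∀ j : Fin (k - 1), v ⟨j + 1, by omega⟩ = α * v ⟨j, by omega⟩) :
    v = geomVec (v ⟨0, hk⟩) α := by
  have key : ∀ n (hn : n < k), v ⟨n, hn⟩ = v ⟨0, hk⟩ * α ^ n := by
    intro n
    induction n with
    | zero => simp
    | succ m ih =>
      intro hn
      rw [h ⟨m, by omega⟩, ih (by omega), pow_succ', mul_left_comm]
  exact funext fun i => key i i.isLt

lemma ne_zero_and_succ_eq_mul_iff [CommMonoidWithZero F] (hk : 0 < k) (v : Fin k → F) :
    (v ≠ 0 ∧ ∃ α, ∀ j : Fin (k - 1), v ⟨j + 1, by omega⟩ = α * v ⟨j, by omega⟩) ↔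
      ∃ c α, c ≠ 0 ∧ v = geomVec c α := by
  constructor
  · rintro ⟨hv, α, h⟩
    have hvα := eq_geomVec_of_succ_eq_mul hk h
    refine ⟨_, α, fun h0 => hv ?_, hvα⟩
    rw [hvα, h0, geomVec_zero_left]
  · rintro ⟨c, α, hc, rfl⟩
    refine ⟨fun h => hc (by simpa [geomVec] using congrFun h ⟨0, hk⟩), α, fun j => ?_⟩
    simp only [geomVec, pow_succ', mul_left_comm]

lemma geomVec_injOn [MonoidWithZero F] [IsLeftCancelMulZero F] (hk : 2 ≤ k) :
    Set.InjOn (fun x : F × F => geomVec (k := k) x.1 x.2) ({c | c ≠ 0} ×ˢ Set.univ) := by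
  rintro ⟨c, α⟩ ⟨hc, -⟩ ⟨c', α'⟩ - h
  have h0 := congrFun h ⟨0, by omega⟩
  have h1 := congrFun h ⟨1, by omega⟩
  simp only [geomVec, pow_zero, mul_one, pow_one] at h0 h1
  subst h0
  exact Prod.ext rfl (mul_left_cancel₀ hc h1)

lemma ncard_setOf_eq_geomVec [Field F] [Fintype F] (hk : 2 ≤ k) :
    {v : Fin k → F | ∃ c α, c ≠ 0 ∧ v = geomVec c α}.ncard =
      Fintype.card F * (Fintype.card F - 1) := by
  have hset : {v : Fin k → F | ∃ c α, c ≠ 0 ∧ v = geomVec c α} =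
      (fun x : F × F => geomVec x.1 x.2) '' ({c | c ≠ 0} ×ˢ Set.univ) := by
    ext v
    simp [eq_comm]
  rw [hset, (geomVec_injOn hk).ncard_image, Set.ncard_prod, Set.ncard_univ,
    show {c : F | c ≠ 0} = {0}ᶜ from rfl, Set.ncard_compl, Set.ncard_singleton,
    Nat.card_eq_fintype_card, mul_comm]

end GeomVec

lemma sum_card_roots_mul_conj_eq_zero {F : Type*} [Field F] [Fintype F] [DecidableEq F]
    {ψ : AddChar F ℂ} (hψ : ψ.IsPrimitive) {k : ℕ} {v : Fin k → F}
    (hv : ∀ t α, v ≠ geomVec t α) :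
    ∑ g : Fin k → F, (#{α | evalc g α = 0} : ℂ) * starRingEnd ℂ (ψ (v ⬝ᵥ g)) = 0 := by
  have hcard : ∀ g : Fin k → F,
      (Fintype.card F : ℂ) * #{α | evalc g α = 0} = ∑ α, ∑ t, ψ (t * evalc g α) := by
    intro g
    simp only [AddChar.sum_mulShift _ hψ, Nat.cast_ite, Nat.cast_zero, ← sum_filter, sum_const,
      nsmul_eq_mul, mul_comm]
  have hQ : (Fintype.card F : ℂ) ≠ 0 := Nat.cast_ne_zero.2 Fintype.card_ne_zero
  refine (mul_eq_zero.1 ?_).resolve_left hQ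
  calc (Fintype.card F : ℂ) *
        ∑ g : Fin k → F, (#{α | evalc g α = 0} : ℂ) * starRingEnd ℂ (ψ (v ⬝ᵥ g))
      = ∑ g : Fin k → F, ∑ α, ∑ t, ψ (t * evalc g α) * ψ (-(v ⬝ᵥ g)) := by
        simp only [mul_sum, ← mul_assoc, hcard, sum_mul, AddChar.map_neg_eq_conj]
    _ = ∑ α, ∑ t, ∑ g : Fin k → F, ψ ((geomVec t α - v) ⬝ᵥ g) := by
        rw [sum_comm]
        refine sum_congr rfl fun α _ => ?_
        rw [sum_comm]
        simp only [← AddChar.map_add_eq_mul, ← sub_eq_add_neg, mul_evalc_eq_geomVec_dotProduct,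
          sub_dotProduct]
    _ = 0 := sum_eq_zero fun α _ => sum_eq_zero fun t _ =>
        hψ.sum_dotProduct_eq_zero (sub_ne_zero.2 (hv t α).symm)

theorem stmt19_general {F : Type*} [Field F] [Fintype F] [DecidableEq F] (p Q k : ℕ)
    [Fact p.Prime] [Algebra (ZMod p) F]
    (hQ : Fintype.card F = Q) (hk : 2 ≤ k) :
    let e : ZMod p → ℂ := fun t => Complex.exp (2 * Real.pi * Complex.I * (t.val : ℂ) / p)
    let χ : (Fin k → F) → (Fin k → F) → ℂ :=
      fun v u => e (Algebra.trace (ZMod p) F (∑ i : Fin k, v i * u i))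
    -- `z g` = the number of roots of `g` in `F`
    let z : (Fin k → F) → ℂ :=
      fun g => ((Finset.univ.filter (fun α : F => evalc g α = 0)).card : ℂ)
    -- exactly Q(Q-1) nontrivial characters satisfy the condition …
    (Set.ncard {v : Fin k → F | v ≠ 0 ∧ ∃ α : F, ∀ f : Fin (k - 1) → F,
        χ v (shiftc f) = χ v (fun i => α * embedc f i)} = Q * (Q - 1)) ∧
    -- … and every other nontrivial character has eigenvalue 0
    (∀ v : Fin k → F, v ≠ 0 →
      ¬(∃ α : F, ∀ f : Fin (k - 1) → F,
          χ v (shiftc f) = χ v (fun i => α * embedc f i)) →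
      ∑ g : Fin k → F, z g * (starRingEnd ℂ) (χ v g) = 0) := by
  intro e χ z
  set ψ := ZMod.stdAddChar.compAddMonoidHom (Algebra.trace (ZMod p) F).toAddMonoidHom
  have hψ : ψ.IsPrimitive := isPrimitive_stdAddChar_comp_trace p F
  have hχ : ∀ v u, χ v u = ψ (v ⬝ᵥ u) := fun v u => by
    simp [χ, e, ψ, ZMod.stdAddChar_apply, ZMod.toCircle_apply, dotProduct]
  have hcond : ∀ v, (v ≠ 0 ∧ ∃ α, ∀ f : Fin (k - 1) → F,
      χ v (shiftc f) = χ v (fun i => α * embedc f i)) ↔ ∃ c α, c ≠ 0 ∧ v = geomVec c α := by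
    intro v
    simp only [hχ]
    rw [← ne_zero_and_succ_eq_mul_iff (by omega)]
    exact and_congr_right fun _ => exists_congr fun α => shiftc_condition_iff hψ v α
  refine ⟨by rw [Set.ext hcond, ncard_setOf_eq_geomVec hk, hQ], fun v hv hnot => ?_⟩
  simp only [z, hχ]
  refine sum_card_roots_mul_conj_eq_zero hψ fun t α h => ?_
  rcases eq_or_ne t 0 with rfl | ht
  · exact hv (h.trans (geomVec_zero_left α))
  · exact hnot ((hcond v).2 ⟨t, α, ht, h⟩).2

theorem stmt19 {F : Type*} [Field F] [Fintype F] [DecidableEq F] (p Q k : ℕ)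
    [Fact p.Prime] [CharP F p] [Algebra (ZMod p) F]
    (hQ : Fintype.card F = Q) (hk : 2 ≤ k) :
    let e : ZMod p → ℂ := fun t => Complex.exp (2 * Real.pi * Complex.I * (t.val : ℂ) / p)
    let χ : (Fin k → F) → (Fin k → F) → ℂ :=
      fun v u => e (Algebra.trace (ZMod p) F (∑ i : Fin k, v i * u i))
    -- `z g` = the number of roots of `g` in `F`
    let z : (Fin k → F) → ℂ :=
      fun g => ((Finset.univ.filter (fun α : F => evalc g α = 0)).card : ℂ)
    -- exactly Q(Q-1) nontrivial characters satisfy the condition …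
    (Set.ncard {v : Fin k → F | v ≠ 0 ∧ ∃ α : F, ∀ f : Fin (k - 1) → F,
        χ v (shiftc f) = χ v (fun i => α * embedc f i)} = Q * (Q - 1)) ∧
    -- … and every other nontrivial character has eigenvalue 0
    (∀ v : Fin k → F, v ≠ 0 →
      ¬(∃ α : F, ∀ f : Fin (k - 1) → F,
          χ v (shiftc f) = χ v (fun i => α * embedc f i)) →
      ∑ g : Fin k → F, z g * (starRingEnd ℂ) (χ v g) = 0) :=
  stmt19_general p Q k hQ hk
end
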